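/- arXiv:2605.06725 — 7 statements merged into one kernel-verified Lean document; each statement's English description precedes it below -/
import Mathlib

section
/- Every simple graph on n vertices that contains no clique on r+1 vertices (where r ≥ 1) has at most (1 - 1/r)·n²/2 edges. -/
/-! Among `K_{r+1}`-free graphs on a fixed vertex set, an edge-maximal one is isomorphic to the
Turán graph `T(n, r)` (Mathlib's `isTuranMaximal_iff_nonempty_iso_turanGraph`), and the balanced
complete `r`-partite graph `T(n, r)` has at most `(r - 1) n² / (2r)` edges. -/

open Finset

namespace SimpleGraph

theorem CliqueFree.mul_card_edgeFinset_le {V : Type*} [Fintype V] {G : SimpleGraph V}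
    [DecidableRel G.Adj] {r : ℕ} (hr : 0 < r) (hfree : G.CliqueFree (r + 1)) :
    2 * r * #G.edgeFinset ≤ (r - 1) * Fintype.card V ^ 2 := by
  obtain ⟨H, _, hH⟩ := exists_isTuranMaximal (V := V) hr
  have hiso := ((isTuranMaximal_iff_nonempty_iso_turanGraph hr).mp hH).some
  calc 2 * r * #G.edgeFinset ≤ 2 * r * #H.edgeFinset := Nat.mul_le_mul_left _ (hH.2 hfree)
    _ = 2 * r * #(turanGraph (Fintype.card V) r).edgeFinset := by
      rw [hiso.card_edgeFinset_eq]
    _ ≤ (r - 1) * Fintype.card V ^ 2 := mul_card_edgeFinset_turanGraph_le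

end SimpleGraph

/-- **Turán's theorem (simple form).** Every simple graph on `n` vertices that contains no
clique on `r + 1` vertices (where `r ≥ 1`) has at most `(1 - 1/r) * n^2 / 2` edges. -/
theorem stmt_0 {V : Type*} [Fintype V] (G : SimpleGraph V) [DecidableRel G.Adj]
    (r : ℕ) (hr : 1 ≤ r) (hfree : G.CliqueFree (r + 1)) :
    (G.edgeFinset.card : ℝ) ≤ (1 - 1 / (r : ℝ)) * (Fintype.card V : ℝ) ^ 2 / 2 := by
  have hbound : (2 * r * G.edgeFinset.card : ℝ) ≤ (r - 1) * (Fintype.card V : ℝ) ^ 2 := by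
    exact_mod_cast hfree.mul_card_edgeFinset_le hr
  have hr' : (0 : ℝ) < r := by exact_mod_cast hr
  rw [one_sub_div hr'.ne', div_mul_eq_mul_div, div_div, le_div_iff₀ (by positivity)]
  linarith
end

section
/- Let G = (V,E) be a finite simple graph that is K_{r+1}-free (r ≥ 1), and assign to each vertex v a nonnegative real number x_v with ∑_{v∈V} x_v = 1. Then ∑_{uv∈E} x_u·x_v ≤ (1/2)·(1 - 1/r). -/
/-!
Write the edge sum as half of the quadratic form `xᵀ A x` of the adjacency matrix `A`.
Shifting weight `t` from `v` to a non-adjacent vertex `u` changes `xᵀ A x` by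
`2 t ((A x)_u - (A x)_v)`: the quadratic term `A_uu - 2 A_uv + A_vv` vanishes. So if
`(A x)_v ≤ (A x)_u`, moving all of `x_v` onto `u` does not decrease the form and shrinks the
support; iterating, we reach a vector `y` supported on a clique, of size `k ≤ r`. Since
`(A y)_v ≤ 1 - y_v`, we get `yᵀ A y ≤ 1 - ∑ y_v² ≤ 1 - 1/k` by Cauchy–Schwarz.
-/
open Finset Matrix

namespace SimpleGraph
variable {V : Type*} {G : SimpleGraph V}

lemma IsClique.card_le_of_cliqueFree {n : ℕ} {s : Finset V} (hs : G.IsClique (s : Set V))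
    (h : G.CliqueFree (n + 1)) : #s ≤ n := by
  by_contra! hn
  obtain ⟨t, hts, ht⟩ := exists_subset_card_eq hn
  exact h t ⟨hs.subset (coe_subset.2 hts), ht⟩

variable [Fintype V] [DecidableRel G.Adj]

variable (G) in
lemma sum_darts_eq_two_nsmul_sum_edgeFinset {M : Type*} [AddCommMonoid M] (f : Sym2 V → M) :
    ∑ d : G.Dart, f d.edge = 2 • ∑ e ∈ G.edgeFinset, f e := by
  classical
  rw [← sum_fiberwise_of_maps_to (g := Dart.edge) (t := G.edgeFinset) (by simp), smul_sum]
  refine sum_congr rfl fun e he => ?_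
  rw [sum_congr rfl fun d hd => congrArg f (mem_filter.1 hd).2, sum_const,
    G.dart_edge_fiber_card e (mem_edgeFinset.1 he)]

lemma dotProduct_adjMatrix_mulVec_eq_sum_darts {α : Type*} [CommSemiring α] (x : V → α) :
    x ⬝ᵥ G.adjMatrix α *ᵥ x = ∑ d : G.Dart, x d.fst * x d.snd := by
  rw [dotProduct_mulVec_adjMatrix, ← Fintype.sum_prod_type', ← sum_filter]
  exact sum_bij' (fun p hp => ⟨p, (mem_filter.1 hp).2⟩) (fun d _ => d.toProd) (by simp)
    (by simp) (fun _ _ => rfl) (fun _ _ => rfl) (fun _ _ => rfl)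

lemma dotProduct_adjMatrix_mulVec_self {α : Type*} [CommSemiring α] (x : V → α) :
    x ⬝ᵥ G.adjMatrix α *ᵥ x =
      2 * ∑ e ∈ G.edgeFinset,
        Sym2.lift ⟨fun u v => x u * x v, fun _ _ => mul_comm _ _⟩ e := by
  rw [dotProduct_adjMatrix_mulVec_eq_sum_darts, two_mul, ← two_nsmul]
  exact G.sum_darts_eq_two_nsmul_sum_edgeFinset
    (Sym2.lift ⟨fun u v => x u * x v, fun _ _ => mul_comm _ _⟩)

lemma dotProduct_adjMatrix_mulVec_add_smul {α : Type*} [CommRing α] [DecidableEq V] (x : V → α)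
    {u v : V} (h : ¬ G.Adj u v) (t : α) :
    let y := x + t • (Pi.single u 1 - Pi.single v 1)
    y ⬝ᵥ G.adjMatrix α *ᵥ y = x ⬝ᵥ G.adjMatrix α *ᵥ x +
      2 * t * ((G.adjMatrix α *ᵥ x) u - (G.adjMatrix α *ᵥ x) v) := by
  intro y
  have hvu : ¬ G.Adj v u := fun h' => h h'.symm
  have hsymm (z w : V → α) :
      z ⬝ᵥ G.adjMatrix α *ᵥ w = w ⬝ᵥ G.adjMatrix α *ᵥ z := by
    rw [dotProduct_mulVec, ← mulVec_transpose, transpose_adjMatrix, dotProduct_comm]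
  simp only [y, add_dotProduct, mulVec_add, dotProduct_add, hsymm x]
  simp [mulVec_smul, mulVec_sub, mulVec_single, adjMatrix_apply, h, hvu]
  ring

section Ordered
variable {α : Type*} [CommRing α] [LinearOrder α] [IsStrictOrderedRing α]

lemma adjMatrix_mulVec_apply_le {x : V → α} (hx : 0 ≤ x) (v : V) :
    (G.adjMatrix α *ᵥ x) v ≤ ∑ u, x u - x v := by
  classical
  rw [adjMatrix_mulVec_apply, ← sum_erase_eq_sub (mem_univ v)]
  exact sum_le_sum_of_subset_of_nonneg (fun u hu => mem_erase.2 ⟨(G.ne_of_adj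
    ((mem_neighborFinset _ _ _).1 hu)).symm, mem_univ u⟩) fun u _ _ => hx u

lemma exists_support_ssubset_of_not_adj {x : V → α} (hx : 0 ≤ x) {u v : V} (hu : x u ≠ 0)
    (hv : x v ≠ 0) (huv : u ≠ v) (hadj : ¬ G.Adj u v)
    (hle : (G.adjMatrix α *ᵥ x) v ≤ (G.adjMatrix α *ᵥ x) u) :
    ∃ y : V → α, 0 ≤ y ∧ ∑ w, y w = ∑ w, x w ∧
      ({w | y w ≠ 0} : Finset V) ⊂ ({w | x w ≠ 0} : Finset V) ∧
      x ⬝ᵥ G.adjMatrix α *ᵥ x ≤ y ⬝ᵥ G.adjMatrix α *ᵥ y := by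
  classical
  set y := x + x v • (Pi.single u 1 - Pi.single v 1)
  have hy : ∀ w, y w = if w = u then x u + x v else if w = v then 0 else x w := by
    intro w
    by_cases hwu : w = u
    · subst hwu; simp [y, huv]
    · by_cases hwv : w = v
      · subst hwv; simp [y, huv.symm]
      · simp [y, hwu, hwv]
  refine ⟨y, fun w => ?_, ?_, ?_, ?_⟩
  · rw [Pi.zero_apply, hy]
    have hxu : 0 ≤ x u := hx u
    have hxv : 0 ≤ x v := hx v
    have hxw : 0 ≤ x w := hx w
    split_ifs <;> linarith
  · simp [y, sum_add_distrib, ← mul_sum]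
  · refine (ssubset_iff_of_subset fun w hw => ?_).2
      ⟨v, by simpa using hv, by simp [hy, huv.symm]⟩
    simp only [mem_filter, mem_univ, true_and, hy] at hw ⊢
    split_ifs at hw with hwu hwv
    · exact hwu ▸ hu
    · exact absurd rfl hw
    · exact hw
  · rw [dotProduct_adjMatrix_mulVec_add_smul x hadj]
    have := mul_nonneg (hx v) (sub_nonneg.2 hle)
    linarith

lemma exists_isClique_support_le (x : V → α) (hx : 0 ≤ x) :
    ∃ y : V → α, 0 ≤ y ∧ ∑ v, y v = ∑ v, x v ∧
      G.IsClique (({v | y v ≠ 0} : Finset V) : Set V) ∧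
      x ⬝ᵥ G.adjMatrix α *ᵥ x ≤ y ⬝ᵥ G.adjMatrix α *ᵥ y := by
  induction h : #{v | x v ≠ 0} using Nat.strong_induction_on generalizing x with
  | _ n ih =>
    by_cases hcl : G.IsClique (({v | x v ≠ 0} : Finset V) : Set V)
    · exact ⟨x, hx, rfl, hcl, le_rfl⟩
    obtain ⟨u, hu, v, hv, huv, hadj⟩ :
        ∃ u, x u ≠ 0 ∧ ∃ v, x v ≠ 0 ∧ u ≠ v ∧ ¬ G.Adj u v := by
      simpa [IsClique, Set.Pairwise] using hcl
    wlog hle : (G.adjMatrix α *ᵥ x) v ≤ (G.adjMatrix α *ᵥ x) u generalizing u v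
    · exact this v hv u hu huv.symm (fun h => hadj h.symm) (le_of_not_ge hle)
    obtain ⟨y, hy, hysum, hss, hxy⟩ := exists_support_ssubset_of_not_adj hx hu hv huv hadj hle
    obtain ⟨z, hz, hzsum, hzcl, hyz⟩ := ih _ (h ▸ card_lt_card hss) y hy rfl
    exact ⟨z, hz, hzsum.trans hysum, hzcl, hxy.trans hyz⟩

end Ordered

lemma dotProduct_adjMatrix_mulVec_le_one_sub_one_div {α : Type*} [Field α] [LinearOrder α]
    [IsStrictOrderedRing α] {x : V → α} (hx : 0 ≤ x) (hsum : ∑ v, x v = 1) {n : ℕ}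
    (hn : #{v | x v ≠ 0} ≤ n) : x ⬝ᵥ G.adjMatrix α *ᵥ x ≤ 1 - 1 / n := by
  have hform : x ⬝ᵥ G.adjMatrix α *ᵥ x ≤ 1 - ∑ v, x v ^ 2 := calc
    x ⬝ᵥ G.adjMatrix α *ᵥ x = ∑ v, x v * (G.adjMatrix α *ᵥ x) v := rfl
    _ ≤ ∑ v, x v * (1 - x v) := sum_le_sum fun v _ =>
      mul_le_mul_of_nonneg_left (hsum ▸ adjMatrix_mulVec_apply_le hx v) (hx v)
    _ = 1 - ∑ v, x v ^ 2 := by simp only [mul_sub, sum_sub_distrib, mul_one, hsum, sq]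
  have hcs : 1 ≤ (∑ v, x v ^ 2) * n := calc
    (1 : α) = (∑ v with x v ≠ 0, x v) ^ 2 := by rw [sum_filter_ne_zero, hsum, one_pow]
    _ ≤ #{v | x v ≠ 0} * ∑ v with x v ≠ 0, x v ^ 2 := sq_sum_le_card_mul_sum_sq
    _ ≤ n * ∑ v, x v ^ 2 := mul_le_mul (by exact_mod_cast hn)
      (sum_le_sum_of_subset_of_nonneg (filter_subset _ _) fun v _ _ => sq_nonneg (x v))
      (sum_nonneg fun v _ => sq_nonneg (x v)) n.cast_nonneg
    _ = (∑ v, x v ^ 2) * n := mul_comm _ _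
  have := div_le_of_le_mul₀ n.cast_nonneg (sum_nonneg fun v _ => sq_nonneg (x v)) hcs
  linarith

end SimpleGraph

theorem stmt_1_general {V : Type*} [Fintype V] (G : SimpleGraph V) [DecidableRel G.Adj]
    (r : ℕ) (hfree : G.CliqueFree (r + 1))
    (x : V → ℝ) (hx : ∀ v, 0 ≤ x v) (hsum : ∑ v, x v = 1) :
    ∑ e ∈ G.edgeFinset, Sym2.lift ⟨fun u v => x u * x v, fun _ _ => mul_comm _ _⟩ e
      ≤ (1 / 2) * (1 - 1 / (r : ℝ)) := by
  obtain ⟨y, hy, hysum, hcl, hxy⟩ := G.exists_isClique_support_le x hx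
  have hbound := G.dotProduct_adjMatrix_mulVec_le_one_sub_one_div hy (hysum.trans hsum)
    (hcl.card_le_of_cliqueFree hfree)
  rw [SimpleGraph.dotProduct_adjMatrix_mulVec_self] at hxy
  linarith

/-- **Motzkin–Straus theorem.** If `G` is a `K_{r+1}`-free finite simple graph (`r ≥ 1`) and
`x` assigns nonnegative reals to the vertices with total sum `1`, then the sum of `x u * x v`
over the (unordered) edges `uv` of `G` is at most `(1/2) * (1 - 1/r)`. -/
theorem stmt_1 {V : Type*} [Fintype V] (G : SimpleGraph V) [DecidableRel G.Adj]
    (r : ℕ) (hr : 1 ≤ r) (hfree : G.CliqueFree (r + 1))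
    (x : V → ℝ) (hx : ∀ v, 0 ≤ x v) (hsum : ∑ v, x v = 1) :
    ∑ e ∈ G.edgeFinset, Sym2.lift ⟨fun u v => x u * x v, fun _ _ => mul_comm _ _⟩ e
      ≤ (1 / 2) * (1 - 1 / (r : ℝ)) :=
  stmt_1_general G r hfree x hx hsum
end

section
/- Let G = (V,E) be a finite simple graph, let a, b be two distinct non-adjacent vertices of G, and let (x_v)_{v∈V} be real numbers. Define L_G(x) = ∑_{uv∈E} x_u·x_v. Let G_a be the induced subgraph of G on V∖{b} with weights x^a given by x^a_a = x_a + x_b and x^a_v = x_v for v ≠ a, and let G_b be the induced subgraph on V∖{a} with weights x^b given by x^b_b = x_a + x_b and x^b_v = x_v for v ≠ b. Then (x_a + x_b)·L_G(x) = x_a·L_{G_a}(x^a) + x_b·L_{G_b}(x^b). -/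
open scoped Classical

/-- `L H y = ∑_{uv ∈ E(H)} y u * y v`, the sum over the unordered edges of `H`. -/
noncomputable def L {W : Type*} [Fintype W] (H : SimpleGraph W) (y : W → ℝ) : ℝ :=
  ∑ e ∈ Finset.univ.filter (fun e : Sym2 W => e ∈ H.edgeSet),
    Sym2.lift ⟨fun u v => y u * y v, fun _ _ => mul_comm _ _⟩ e

/-!
Extending the weights of `G_a` and `G_b` by `0` at the deleted vertex turns both sides into sums
over the edges of `G`, and the identity then holds edge by edge: an edge avoiding `a` and `b`
contributes `x u * x v` to both terms on the right, an edge `a v` contributes `(x a + x b) * x v`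
to the `G_a` term only (and symmetrically for `b`), and there is no edge `a b`.
-/

lemma mul_L_eq_of_adj {W : Type*} [Fintype W] (H : SimpleGraph W) {y y₁ y₂ : W → ℝ}
    {c c₁ c₂ : ℝ}
    (h : ∀ u v, H.Adj u v → c * (y u * y v) = c₁ * (y₁ u * y₁ v) + c₂ * (y₂ u * y₂ v)) :
    c * L H y = c₁ * L H y₁ + c₂ * L H y₂ := by
  simp only [L, Finset.mul_sum, ← Finset.sum_add_distrib]
  refine Finset.sum_congr rfl fun e he => ?_
  induction e using Sym2.ind with
  | _ u v => simpa using h u v (by simpa using he)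

lemma L_comp_embedding {W V : Type*} [Fintype W] [Fintype V] {H : SimpleGraph W}
    {G : SimpleGraph V} (f : H ↪g G) (y : V → ℝ) (hy : ∀ v, v ∉ Set.range f → y v = 0) :
    L H (y ∘ f) = L G y := by
  have hmap (e : Sym2 W) :
      Sym2.lift ⟨fun u v => (y ∘ f) u * (y ∘ f) v, fun _ _ => mul_comm _ _⟩ e
        = Sym2.lift ⟨fun u v => y u * y v, fun _ _ => mul_comm _ _⟩ (e.map f) := by
    induction e using Sym2.ind with | _ u v => rfl
  rw [L, L, Finset.sum_congr rfl fun e _ => hmap e,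
    ← Finset.sum_image fun _ _ _ _ h => Sym2.map.injective f.injective h]
  refine Finset.sum_subset ?_ fun e he hne => ?_
  · simp only [Finset.subset_iff, Finset.mem_image, Finset.mem_filter, Finset.mem_univ, true_and]
    rintro _ ⟨e, he, rfl⟩
    exact f.map_mem_edgeSet_iff.mpr he
  · induction e using Sym2.ind with
    | _ u v =>
      simp only [Finset.mem_image, Finset.mem_filter, Finset.mem_univ, true_and, not_exists,
        not_and] at he hne
      by_cases hrange : u ∈ Set.range f ∧ v ∈ Set.range f
      · obtain ⟨⟨u, rfl⟩, ⟨v, rfl⟩⟩ := hrange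
        exact absurd rfl (hne s(u, v) (f.map_adj_iff.mp he))
      · rcases not_and_or.mp hrange with hu | hv
        · simp [hy u hu]
        · simp [hy v hv]

lemma L_induce {V : Type*} [Fintype V] (G : SimpleGraph V) (s : Set V) [Fintype s]
    (y : V → ℝ) :
    L (G.induce s) (fun v => y v) = L G (s.indicator y) := by
  rw [← L_comp_embedding (SimpleGraph.Embedding.induce s)]
  · congr 1
    ext v
    simp
  · rintro v hv
    exact Set.indicator_of_notMem (fun hs => hv ⟨⟨v, hs⟩, rfl⟩) y

/-- If `a, b` are distinct non-adjacent vertices of a finite simple graph `G` with vertex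
weights `x`, `G_a` is the induced subgraph on `V \ {b}` with the weight of `a` replaced by
`x a + x b`, and `G_b` is the induced subgraph on `V \ {a}` with the weight of `b` replaced by
`x a + x b`, then `(x a + x b) * L G x = x a * L (G_a) x^a + x b * L (G_b) x^b`. -/
theorem stmt_2 {V : Type*} [Fintype V] [DecidableEq V] (G : SimpleGraph V)
    (a b : V) (hab : a ≠ b) (hnadj : ¬ G.Adj a b) (x : V → ℝ) :
    (x a + x b) * L G x
      = x a * L (G.induce {v | v ≠ b}) (fun v => if (v : V) = a then x a + x b else x v)
        + x b * L (G.induce {v | v ≠ a}) (fun v => if (v : V) = b then x a + x b else x v) := by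
  rw [L_induce G _ (fun v => if v = a then x a + x b else x v),
    L_induce G _ (fun v => if v = b then x a + x b else x v)]
  have hnadj' : ¬ G.Adj b a := fun h => hnadj h.symm
  refine mul_L_eq_of_adj G fun u v huv => ?_
  simp only [Set.indicator_apply, Set.mem_ofPred_eq]
  split_ifs <;> subst_vars <;> simp_all <;> ring
end

section
/- Let (V,E) be a 3-graph, A a set of ordered pairs of distinct vertices, and c : V → ℕ. Define the blown-up 3-graph H on vertex set Σ v : V, Fin (c v) whose edges are: all 3-element sets {(u,i),(v,j),(w,k)} with u, v, w pairwise distinct and {u,v,w} ∈ E, together with all 3-element sets {(u,i),(u,j),(v,k)} with i ≠ j and (u,v) ∈ A. If there exist pairwise distinct vertices u, v, w with (u,v) ∈ A, (u,w) ∈ A, {u,v,w} ∈ E, and c u ≥ 2, c v ≥ 1, c w ≥ 1, then H contains a copy of K^3_4, i.e., H is not K^3_4-free. -/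
/-- A 3-graph (collection `E` of 3-element subsets of `V`) is `K^3_4`-free if there is no
4-element vertex set all of whose 3-element subsets are edges. -/
def K34Free {V : Type*} (E : Set (Finset V)) : Prop :=
  ¬ ∃ s : Finset V, s.card = 4 ∧ ∀ t ⊆ s, t.card = 3 → t ∈ E

/-- The blown-up 3-graph of `(V, E)` with multiplicities `c`, augmented by a set `A` of ordered
pairs: its edges are all 3-element sets `{(u,i), (v,j), (w,k)}` with `u, v, w` pairwise distinct
and `{u,v,w} ∈ E`, together with all 3-element sets `{(u,i), (u,j), (v,k)}` with `i ≠ j` and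
`(u,v) ∈ A`. -/
def blowupEdgesA {V : Type*} [DecidableEq V] (E : Set (Finset V)) (A : Set (V × V))
    (c : V → ℕ) : Set (Finset (Σ v : V, Fin (c v))) :=
  {t | t.card = 3 ∧ (t.image Sigma.fst).card = 3 ∧ t.image Sigma.fst ∈ E} ∪
    {t | ∃ (u v : V) (i j : Fin (c u)) (k : Fin (c v)), i ≠ j ∧ (u, v) ∈ A ∧
      t = {⟨u, i⟩, ⟨u, j⟩, ⟨v, k⟩}}

/-- If there are pairwise distinct vertices `u, v, w` with `(u,v) ∈ A`, `(u,w) ∈ A`,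
`{u,v,w} ∈ E`, and `c u ≥ 2`, `c v ≥ 1`, `c w ≥ 1`, then the blown-up 3-graph contains a copy
of `K^3_4`, i.e. it is not `K^3_4`-free. -/
theorem stmt_9 {V : Type*} [Fintype V] [DecidableEq V] (E : Set (Finset V))
    (hE : ∀ e ∈ E, e.card = 3) (A : Set (V × V)) (hA : ∀ p ∈ A, p.1 ≠ p.2) (c : V → ℕ)
    (h : ∃ u v w : V, u ≠ v ∧ u ≠ w ∧ v ≠ w ∧ (u, v) ∈ A ∧ (u, w) ∈ A ∧
      ({u, v, w} : Finset V) ∈ E ∧ 2 ≤ c u ∧ 1 ≤ c v ∧ 1 ≤ c w) :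
    ¬ K34Free (blowupEdgesA E A c) := by
  obtain ⟨u, v, w, huv, huw, hvw, hAuv, hAuw, hEuvw, hcu, hcv, hcw⟩ := h
  intro hfree
  apply hfree
  set a0 : Σ v : V, Fin (c v) := ⟨u, ⟨0, by omega⟩⟩ with ha0
  set a1 : Σ v : V, Fin (c v) := ⟨u, ⟨1, by omega⟩⟩ with ha1
  set b : Σ v : V, Fin (c v) := ⟨v, ⟨0, by omega⟩⟩ with hb
  set d : Σ v : V, Fin (c v) := ⟨w, ⟨0, by omega⟩⟩ with hd
  have h01 : a0 ≠ a1 := by simp [ha0, ha1]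
  have h0b : a0 ≠ b := by simp [ha0, hb, huv]
  have h0d : a0 ≠ d := by simp [ha0, hd, huw]
  have h1b : a1 ≠ b := by simp [ha1, hb, huv]
  have h1d : a1 ≠ d := by simp [ha1, hd, huw]
  have hbd : b ≠ d := by simp [hb, hd, hvw]
  refine ⟨{a0, a1, b, d}, ?_, ?_⟩
  · rw [Finset.card_insert_of_notMem (by simp [h01, h0b, h0d]),
      Finset.card_insert_of_notMem (by simp [h1b, h1d]),
      Finset.card_insert_of_notMem (by simp [hbd]), Finset.card_singleton]
  · intro t hts hcard
    -- t = s.erase x for some x ∈ s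
    have hss : t ⊂ ({a0, a1, b, d} : Finset _) := by
      refine lt_of_le_of_ne hts ?_
      intro h; rw [h] at hcard
      rw [Finset.card_insert_of_notMem (by simp [h01, h0b, h0d]),
        Finset.card_insert_of_notMem (by simp [h1b, h1d]),
        Finset.card_insert_of_notMem (by simp [hbd]), Finset.card_singleton] at hcard
      omega
    obtain ⟨x, hxs, hxt⟩ := Finset.exists_of_ssubset hss
    have htx : t ⊆ ({a0, a1, b, d} : Finset _).erase x :=
      fun y hy => Finset.mem_erase.2 ⟨fun he => hxt (he ▸ hy), hts hy⟩
    have hcardx : (({a0, a1, b, d} : Finset _).erase x).card = 3 := by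
      rw [Finset.card_erase_of_mem hxs,
        Finset.card_insert_of_notMem (by simp [h01, h0b, h0d]),
        Finset.card_insert_of_notMem (by simp [h1b, h1d]),
        Finset.card_insert_of_notMem (by simp [hbd]), Finset.card_singleton]
    have ht : t = ({a0, a1, b, d} : Finset _).erase x :=
      Finset.eq_of_subset_of_card_le htx (by omega)
    have hEmem : ∀ (i : Fin (c u)), ({⟨u,i⟩, b, d} : Finset (Σ v : V, Fin (c v))) ∈ blowupEdgesA E A c := by
      intro i
      left
      have hib : (⟨u, i⟩ : Σ v : V, Fin (c v)) ≠ b := by simp [hb, huv]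
      have hid : (⟨u, i⟩ : Σ v : V, Fin (c v)) ≠ d := by simp [hd, huw]
      constructor
      · rw [Finset.card_insert_of_notMem (by simp [hib, hid]),
          Finset.card_insert_of_notMem (by simp [hbd]), Finset.card_singleton]
      · have himg : (({⟨u,i⟩, b, d} : Finset (Σ v : V, Fin (c v))).image Sigma.fst) = {u, v, w} := by
          simp [hb, hd, Finset.image_insert]
        rw [himg]
        exact ⟨hE _ hEuvw, hEuvw⟩
    simp only [Finset.mem_insert, Finset.mem_singleton] at hxs
    rcases hxs with rfl | rfl | rfl | rfl
    · have : t = ({a1, b, d} : Finset _) := by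
        rw [ht, Finset.erase_insert (by simp [h01, h0b, h0d])]
      rw [this]; exact hEmem _
    · have : t = ({a0, b, d} : Finset _) := by
        rw [ht]
        rw [Finset.erase_insert_of_ne (h01), Finset.erase_insert (by simp [h1b, h1d])]
      rw [this]; exact hEmem _
    · have : t = ({a0, a1, d} : Finset _) := by
        rw [ht, Finset.erase_insert_of_ne (h0b), Finset.erase_insert_of_ne (h1b),
          Finset.erase_insert (by simp [hbd])]
      rw [this]
      right
      exact ⟨u, w, _, _, _, by simp, hAuw, rfl⟩
    · have : t = ({a0, a1, b} : Finset _) := by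
        rw [ht, Finset.erase_insert_of_ne (h0d), Finset.erase_insert_of_ne (h1d),
          Finset.erase_insert_of_ne (hbd), Finset.erase_singleton]; rfl
      rw [this]
      right
      exact ⟨u, v, _, _, _, by simp, hAuv, rfl⟩
end

section
/- Let D = (V,A) be a finite oriented graph (A is an irreflexive, antisymmetric relation: never both u→v and v→u) that contains no directed cycle of length 4 (no pairwise distinct vertices a,b,c,d with a→b, b→c, c→d, d→a in A). Define the 3-graph E on V consisting of all 3-element subsets {u,v,w} such that the subdigraph of D induced on {u,v,w} has at least 2 arcs and contains no vertex with two out-arcs inside {u,v,w} (i.e., no copy of the out-star a→b, a→c). Then (V,E) is K^3_4-free. -/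
/-- The Fon-der-Flaass 3-graph of a digraph `A`: the edges are the 3-element sets `{u, v, w}`
such that the subdigraph induced on `{u, v, w}` has at least 2 arcs and contains no vertex with
two out-arcs inside `{u, v, w}`. -/
def fdfEdges {V : Type*} [DecidableEq V] (A : V → V → Prop) [DecidableRel A] :
    Set (Finset V) :=
  {t | ∃ u v w : V, u ≠ v ∧ u ≠ w ∧ v ≠ w ∧ t = {u, v, w} ∧
    2 ≤ ((if A u v then 1 else 0) + (if A v u then 1 else 0) + (if A u w then 1 else 0) +
          (if A w u then 1 else 0) + (if A v w then 1 else 0) + (if A w v then 1 else 0) : ℕ) ∧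
    ¬ ((A u v ∧ A u w) ∨ (A v u ∧ A v w) ∨ (A w u ∧ A w v))}

set_option maxRecDepth 100000 in
set_option synthInstance.maxSize 4000 in
set_option synthInstance.maxHeartbeats 1000000 in
set_option maxHeartbeats 2000000 in
lemma fdf_boolkey : ∀ ab ba ac ca ad da bc cb bd db cd dc : Bool,
    2 ≤ ab.toNat + ba.toNat + ac.toNat + ca.toNat + bc.toNat + cb.toNat →
    2 ≤ ab.toNat + ba.toNat + ad.toNat + da.toNat + bd.toNat + db.toNat →
    2 ≤ ac.toNat + ca.toNat + ad.toNat + da.toNat + cd.toNat + dc.toNat →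
    2 ≤ bc.toNat + cb.toNat + bd.toNat + db.toNat + cd.toNat + dc.toNat →
    (ab && ac) = false → (ab && ad) = false → (ac && ad) = false →
    (ba && bc) = false → (ba && bd) = false → (bc && bd) = false →
    (ca && cb) = false → (ca && cd) = false → (cb && cd) = false →
    (da && db) = false → (da && dc) = false → (db && dc) = false →
    (ab && ba) = false → (ac && ca) = false → (ad && da) = false →
    (bc && cb) = false → (bd && db) = false → (cd && dc) = false →
    (ab && bc && cd && da) = false →
    (ad && dc && cb && ba) = false →
    (ab && bd && dc && ca) = false →
    (ac && cd && db && ba) = false →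
    (ac && cb && bd && da) = false →
    (ad && db && bc && ca) = false →
    False := by decide

lemma fdf_and2 {p q : Prop} [Decidable p] [Decidable q] (h : ¬(p ∧ q)) :
    (decide p && decide q) = false := by
  by_cases hp : p <;> by_cases hq : q <;> simp_all

lemma fdf_and4 {p q r s : Prop} [Decidable p] [Decidable q] [Decidable r] [Decidable s]
    (h : ¬(p ∧ q ∧ r ∧ s)) : (decide p && decide q && decide r && decide s) = false := by
  by_cases hp : p <;> by_cases hq : q <;> by_cases hr : r <;> by_cases hs : s <;> simp_all

lemma fdf_extract {V : Type*} [DecidableEq V] (A : V → V → Prop) [DecidableRel A]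
    {u v w : V} (h1 : u ≠ v) (h2 : u ≠ w) (h3 : v ≠ w)
    (he : ({u, v, w} : Finset V) ∈ fdfEdges A) :
    2 ≤ ((if A u v then 1 else 0) + (if A v u then 1 else 0) + (if A u w then 1 else 0) +
          (if A w u then 1 else 0) + (if A v w then 1 else 0) + (if A w v then 1 else 0) : ℕ) ∧
    ¬ ((A u v ∧ A u w) ∨ (A v u ∧ A v w) ∨ (A w u ∧ A w v)) := by
  obtain ⟨u', v', w', d1, d2, d3, heq, hc, hs⟩ := he
  have hu : u = u' ∨ u = v' ∨ u = w' := by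
    have : u ∈ ({u', v', w'} : Finset V) := heq ▸ (by simp)
    simpa using this
  have hv : v = u' ∨ v = v' ∨ v = w' := by
    have : v ∈ ({u', v', w'} : Finset V) := heq ▸ (by simp)
    simpa using this
  have hw : w = u' ∨ w = v' ∨ w = w' := by
    have : w ∈ ({u', v', w'} : Finset V) := heq ▸ (by simp)
    simpa using this
  rcases hu with rfl | rfl | rfl <;> rcases hv with rfl | rfl | rfl <;>
    rcases hw with rfl | rfl | rfl <;>
    first
      | exact ⟨by linarith, by tauto⟩
      | simp_all

/-- **Fon-der-Flaass construction.** If `A` is an oriented graph (irreflexive and antisymmetric)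
with no directed cycle of length 4, then its Fon-der-Flaass 3-graph is `K^3_4`-free. -/
theorem stmt_10 {V : Type*} [Fintype V] [DecidableEq V] (A : V → V → Prop) [DecidableRel A]
    (hirr : ∀ v, ¬ A v v) (hanti : ∀ u v, A u v → ¬ A v u)
    (hC4 : ¬ ∃ a b c d : V, a ≠ b ∧ a ≠ c ∧ a ≠ d ∧ b ≠ c ∧ b ≠ d ∧ c ≠ d ∧
      A a b ∧ A b c ∧ A c d ∧ A d a) :
    K34Free (fdfEdges A) := by
  rintro ⟨s, hcard, hall⟩
  obtain ⟨a, t, hat, rfl, ht3⟩ := Finset.card_eq_succ.mp hcard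
  obtain ⟨b, c, d, hbc, hbd, hcd, rfl⟩ := Finset.card_eq_three.mp ht3
  simp only [Finset.mem_insert, Finset.mem_singleton, not_or] at hat
  obtain ⟨hab, hac, had⟩ := hat
  have sub1 : ({a, b, c} : Finset V) ⊆ insert a {b, c, d} := by
    intro x hx; simp at hx ⊢; tauto
  have sub2 : ({a, b, d} : Finset V) ⊆ insert a {b, c, d} := by
    intro x hx; simp at hx ⊢; tauto
  have sub3 : ({a, c, d} : Finset V) ⊆ insert a {b, c, d} := by
    intro x hx; simp at hx ⊢; tauto
  have sub4 : ({b, c, d} : Finset V) ⊆ insert a {b, c, d} := Finset.subset_insert _ _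
  have e1 := fdf_extract A hab hac hbc (hall _ sub1 (Finset.card_eq_three.mpr ⟨a, b, c, hab, hac, hbc, rfl⟩))
  have e2 := fdf_extract A hab had hbd (hall _ sub2 (Finset.card_eq_three.mpr ⟨a, b, d, hab, had, hbd, rfl⟩))
  have e3 := fdf_extract A hac had hcd (hall _ sub3 (Finset.card_eq_three.mpr ⟨a, c, d, hac, had, hcd, rfl⟩))
  have e4 := fdf_extract A hbc hbd hcd (hall _ sub4 (Finset.card_eq_three.mpr ⟨b, c, d, hbc, hbd, hcd, rfl⟩))
  obtain ⟨c1, o1⟩ := e1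
  obtain ⟨c2, o2⟩ := e2
  obtain ⟨c3, o3⟩ := e3
  obtain ⟨c4, o4⟩ := e4
  push_neg at o1 o2 o3 o4
  have key : ∀ x y : V, (if A x y then (1 : ℕ) else 0) = (decide (A x y)).toNat := by
    intro x y; by_cases h : A x y <;> simp [h]
  simp only [key] at c1 c2 c3 c4
  refine fdf_boolkey (decide (A a b)) (decide (A b a)) (decide (A a c)) (decide (A c a))
    (decide (A a d)) (decide (A d a)) (decide (A b c)) (decide (A c b))
    (decide (A b d)) (decide (A d b)) (decide (A c d)) (decide (A d c))
    c1 c2 c3 c4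
    (fdf_and2 (fun h => (o1.1 h.1) h.2))
    (fdf_and2 (fun h => (o2.1 h.1) h.2))
    (fdf_and2 (fun h => (o3.1 h.1) h.2))
    (fdf_and2 (fun h => (o1.2.1 h.1) h.2))
    (fdf_and2 (fun h => (o2.2.1 h.1) h.2))
    (fdf_and2 (fun h => (o4.1 h.1) h.2))
    (fdf_and2 (fun h => (o1.2.2 h.1) h.2))
    (fdf_and2 (fun h => (o3.2.1 h.1) h.2))
    (fdf_and2 (fun h => (o4.2.1 h.1) h.2))
    (fdf_and2 (fun h => (o2.2.2 h.1) h.2))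
    (fdf_and2 (fun h => (o3.2.2 h.1) h.2))
    (fdf_and2 (fun h => (o4.2.2 h.1) h.2))
    (fdf_and2 (fun h => hanti a b h.1 h.2))
    (fdf_and2 (fun h => hanti a c h.1 h.2))
    (fdf_and2 (fun h => hanti a d h.1 h.2))
    (fdf_and2 (fun h => hanti b c h.1 h.2))
    (fdf_and2 (fun h => hanti b d h.1 h.2))
    (fdf_and2 (fun h => hanti c d h.1 h.2))
    (fdf_and4 (fun h => hC4 ⟨a, b, c, d, hab, hac, had, hbc, hbd, hcd, h.1, h.2.1, h.2.2.1, h.2.2.2⟩))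
    (fdf_and4 (fun h => hC4 ⟨a, d, c, b, had, hac, hab, hcd.symm, hbd.symm, hbc.symm, h.1, h.2.1, h.2.2.1, h.2.2.2⟩))
    (fdf_and4 (fun h => hC4 ⟨a, b, d, c, hab, had, hac, hbd, hbc, hcd.symm, h.1, h.2.1, h.2.2.1, h.2.2.2⟩))
    (fdf_and4 (fun h => hC4 ⟨a, c, d, b, hac, had, hab, hcd, hbc.symm, hbd.symm, h.1, h.2.1, h.2.2.1, h.2.2.2⟩))
    (fdf_and4 (fun h => hC4 ⟨a, c, b, d, hac, hab, had, hbc.symm, hcd, hbd, h.1, h.2.1, h.2.2.1, h.2.2.2⟩))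
    (fdf_and4 (fun h => hC4 ⟨a, d, b, c, had, hab, hac, hbd.symm, hcd.symm, hbc, h.1, h.2.1, h.2.2.1, h.2.2.2⟩))
end

section
/- Let V be a finite set, A a set of unordered pairs of distinct elements of V, and let E be the set of 3-element subsets {u,v,w} of V such that at least 2 of the pairs {u,v},{v,w},{u,w} belong to A. Let p : V × V → [0,1] satisfy p(u,v) + p(v,u) = 1 whenever {u,v} ∈ A and p(u,v) = p(v,u) = 0 whenever {u,v} ∉ A, and let (x_v)_{v∈V} be nonnegative reals. Then ∑_{{u,v,w}∈E} (1 − p(u,v)p(u,w) − p(v,w)p(v,u) − p(w,u)p(w,v))·x_u·x_v·x_w + (1/2)·∑_{{u,v}∈A} (p(u,v)²·x_u²·x_v + p(v,u)²·x_v²·x_u) ≤ ∑_{{u,v,w}∈E} x_u·x_v·x_w + (1/2)·∑_{{u,v}∈A} (x_u²·x_v + x_v²·x_u) − (1/2)·∑_{u∈V} x_u·(∑_{v : {u,v}∈A} p(u,v)·x_v)². -/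
/-!
Expanding the square, `∑ u, x u * (∑ v, p (u, v) * x v) ^ 2` splits into a diagonal part
`∑_{u ≠ v} p(u,v)² x_u x_v²`, which lives on the edges of `A`, and twice a sum over 3-sets
`{u, v, w}` of `p(u,v) p(u,w) x_u x_v x_w`, which vanishes unless `{u,v}, {u,w} ∈ A` and so lives
on `triEdges A`. After cancelling the triangle terms, the claim reduces edge by edge to
`(p² + q²) · x y (x + y) ≤ x y (x + y)` for `p, q ≥ 0` with `p + q = 1`.
-/

/-- The 3-graph associated with a graph `A` on `V`: all 3-element subsets `t` of `V` such that
at least 2 of the three pairs inside `t` belong to `A`. -/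
def triEdges {V : Type*} [Fintype V] [DecidableEq V] (A : Finset (Finset V)) :
    Finset (Finset V) :=
  Finset.univ.filter fun t : Finset V =>
    t.card = 3 ∧ 2 ≤ ((t.powersetCard 2).filter (· ∈ A)).card

open Finset

namespace Finset

variable {α β : Type*} [DecidableEq α]

theorem sum_powersetCard_succ_sum_erase [AddCommMonoid β] (s : Finset α) (k : ℕ)
    (g : α → Finset α → β) :
    ∑ t ∈ s.powersetCard (k + 1), ∑ a ∈ t, g a (t.erase a)
      = ∑ a ∈ s, ∑ u ∈ (s.erase a).powersetCard k, g a u := by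
  rw [sum_comm' (t' := s) (s' := fun a => (s.powersetCard (k + 1)).filter (a ∈ ·))]
  · refine sum_congr rfl fun a ha =>
      sum_nbij' (·.erase a) (insert a) ?_ ?_ ?_ ?_ fun _ _ => rfl
    · intro t ht
      simp only [mem_filter, mem_powersetCard] at ht
      simp only [mem_powersetCard]
      exact ⟨erase_subset_erase a ht.1.1, by rw [card_erase_of_mem ht.2, ht.1.2]; rfl⟩
    · intro u hu
      simp only [mem_powersetCard] at hu
      simp only [mem_filter, mem_powersetCard, mem_insert_self, and_true]
      have ha' : a ∉ u := fun h => by simpa using hu.1 h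
      exact ⟨insert_subset ha (hu.1.trans (erase_subset a s)),
        by rw [card_insert_of_notMem ha', hu.2]⟩
    · intro t ht
      simp only [mem_filter] at ht
      exact insert_erase ht.2
    · intro u hu
      simp only [mem_powersetCard] at hu
      exact erase_insert fun h => by simpa using hu.1 h
  · intro t a
    simp only [mem_filter, mem_powersetCard]
    exact ⟨fun h => ⟨h, h.1.1 h.2⟩, And.left⟩

theorem sum_sum_erase_pair [AddCommMonoid β] {u v : α} (h : u ≠ v) (f : α → α → β) :
    ∑ a ∈ {u, v}, ∑ b ∈ ({u, v} : Finset α).erase a, f a b = f u v + f v u := by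
  rw [sum_pair h, erase_insert (notMem_singleton.mpr h), pair_comm,
    erase_insert (notMem_singleton.mpr h.symm), sum_singleton, sum_singleton]

theorem sum_sum_erase_eq_sum_powersetCard_two [AddCommMonoid β] (s : Finset α)
    (f : α → α → β) :
    ∑ a ∈ s, ∑ b ∈ s.erase a, f a b
      = ∑ t ∈ s.powersetCard 2, ∑ a ∈ t, ∑ b ∈ t.erase a, f a b := by
  rw [sum_powersetCard_succ_sum_erase s 1 fun a u => ∑ b ∈ u, f a b]
  simp only [powersetCard_one, sum_map, Function.Embedding.coeFn_mk, sum_singleton]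

theorem sq_sum_eq_sum_sq_add_two_mul_sum_powersetCard_two [CommSemiring β] (s : Finset α)
    (y : α → β) :
    (∑ a ∈ s, y a) ^ 2 = ∑ a ∈ s, y a ^ 2 + 2 * ∑ t ∈ s.powersetCard 2, ∏ a ∈ t, y a := by
  have hoff : ∑ a ∈ s, ∑ b ∈ s.erase a, y a * y b
      = 2 * ∑ t ∈ s.powersetCard 2, ∏ a ∈ t, y a := by
    rw [sum_sum_erase_eq_sum_powersetCard_two, mul_sum]
    refine sum_congr rfl fun t ht => ?_
    obtain ⟨u, v, huv, rfl⟩ := card_eq_two.mp (mem_powersetCard.mp ht).2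
    rw [sum_sum_erase_pair huv, prod_pair huv, mul_comm (y v), two_mul]
  rw [← hoff, ← sum_add_distrib, sq, sum_mul_sum]
  refine sum_congr rfl fun a ha => ?_
  rw [← add_sum_erase s _ ha, sq]

end Finset

section TriEdges

variable {V : Type*} [Fintype V] [DecidableEq V] {A : Finset (Finset V)}

theorem mem_triEdges_of_forall_pair_mem {t : Finset V} {a : V} (ht : t.card = 3) (ha : a ∈ t)
    (hA : ∀ b ∈ t.erase a, ({a, b} : Finset V) ∈ A) : t ∈ triEdges A := by
  refine mem_filter.mpr ⟨mem_univ t, ht, ?_⟩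
  have hinj : Set.InjOn (fun b => ({a, b} : Finset V)) (t.erase a) := by
    intro b hb c _ hbc
    have : b ∈ ({a, c} : Finset V) :=
      (show ({a, b} : Finset V) = {a, c} from hbc) ▸ mem_insert_of_mem (mem_singleton_self b)
    simpa [ne_of_mem_erase hb] using this
  calc 2 = (t.erase a).card := by rw [card_erase_of_mem ha, ht]
    _ ≤ _ := card_le_card_of_injOn _ (fun b hb => by
        simp only [coe_filter, mem_powersetCard]
        exact ⟨⟨insert_subset ha (singleton_subset_iff.mpr (mem_of_mem_erase hb)),
          card_pair (ne_of_mem_erase hb).symm⟩, hA b hb⟩) hinj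

theorem prod_erase_eq_zero_of_notMem_triEdges {p : V × V → ℝ}
    (hp : ∀ a b : V, ({a, b} : Finset V) ∉ A → p (a, b) = 0) {t : Finset V} {a : V}
    (ht : t.card = 3) (htA : t ∉ triEdges A) (ha : a ∈ t) :
    ∏ b ∈ t.erase a, p (a, b) = 0 := by
  by_contra h
  refine htA (mem_triEdges_of_forall_pair_mem ht ha fun b hb => ?_)
  by_contra hab
  exact h (prod_eq_zero hb (hp a b hab))

theorem sum_sum_erase_eq_sum_edges {β : Type*} [AddCommMonoid β]
    (hA : ∀ e ∈ A, e.card = 2) (f : V → V → β)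
    (hf : ∀ a b : V, ({a, b} : Finset V) ∉ A → f a b = 0) :
    ∑ a, ∑ b ∈ univ.erase a, f a b = ∑ e ∈ A, ∑ a ∈ e, ∑ b ∈ e.erase a, f a b := by
  rw [sum_sum_erase_eq_sum_powersetCard_two]
  refine (sum_subset (fun e he => mem_powersetCard.mpr ⟨subset_univ e, hA e he⟩) ?_).symm
  intro e he heA
  obtain ⟨u, v, huv, rfl⟩ := card_eq_two.mp (mem_powersetCard.mp he).2
  rw [sum_sum_erase_pair huv, hf u v heA, hf v u (by rwa [pair_comm]), add_zero]

theorem sum_sum_powersetCard_two_eq_sum_triEdges (p : V × V → ℝ)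
    (hp : ∀ a b : V, ({a, b} : Finset V) ∉ A → p (a, b) = 0) (x : V → ℝ) :
    ∑ u, ∑ s ∈ (univ.erase u).powersetCard 2, x u * ∏ b ∈ s, p (u, b) * x b
      = ∑ t ∈ triEdges A, (∑ a ∈ t, ∏ b ∈ t.erase a, p (a, b)) * ∏ v ∈ t, x v := by
  rw [← sum_powersetCard_succ_sum_erase]
  have hsub : triEdges A ⊆ univ.powersetCard 3 := fun t ht =>
    mem_powersetCard.mpr ⟨subset_univ t, (mem_filter.mp ht).2.1⟩
  refine (sum_subset hsub fun t ht htA => ?_).symm.trans (sum_congr rfl fun t _ => ?_)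
  · refine sum_eq_zero fun a ha => ?_
    rw [prod_mul_distrib, prod_erase_eq_zero_of_notMem_triEdges hp (mem_powersetCard.mp ht).2 htA ha,
      zero_mul, mul_zero]
  · rw [sum_mul]
    refine sum_congr rfl fun a ha => ?_
    rw [prod_mul_distrib, ← mul_prod_erase t x ha]
    ring

theorem sum_mul_sq_sum_eq_sum_edges_add_sum_triEdges (hA : ∀ e ∈ A, e.card = 2)
    (p : V × V → ℝ) (hp : ∀ a b : V, ({a, b} : Finset V) ∉ A → p (a, b) = 0) (x : V → ℝ) :
    ∑ u, x u * (∑ v, p (u, v) * x v) ^ 2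
      = ∑ e ∈ A, ∑ a ∈ e, ∑ b ∈ e.erase a, p (a, b) ^ 2 * x a * x b ^ 2
        + 2 * ∑ t ∈ triEdges A, (∑ a ∈ t, ∏ b ∈ t.erase a, p (a, b)) * ∏ v ∈ t, x v := by
  have hdiag : ∀ u, p (u, u) = 0 := fun u =>
    hp u u fun h => by simpa using hA _ h
  have hrow : ∀ u, ∑ v, p (u, v) * x v = ∑ v ∈ univ.erase u, p (u, v) * x v := fun u =>
    (sum_erase _ (by rw [hdiag, zero_mul])).symm
  calc ∑ u, x u * (∑ v, p (u, v) * x v) ^ 2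
      = ∑ u, ∑ v ∈ univ.erase u, p (u, v) ^ 2 * x u * x v ^ 2
        + 2 * ∑ u, ∑ s ∈ (univ.erase u).powersetCard 2, x u * ∏ b ∈ s, p (u, b) * x b := by
        rw [mul_sum, ← sum_add_distrib]
        refine sum_congr rfl fun u _ => ?_
        rw [hrow, sq_sum_eq_sum_sq_add_two_mul_sum_powersetCard_two, mul_add, mul_sum, mul_sum,
          mul_sum, mul_sum]
        congr 1 <;> exact sum_congr rfl fun _ _ => by ring
    _ = _ := by
        rw [sum_sum_erase_eq_sum_edges hA _ fun a b h => by rw [hp a b h]; ring,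
          sum_sum_powersetCard_two_eq_sum_triEdges p hp x]

end TriEdges

theorem weighted_cubic_le {p q x y : ℝ} (hp : 0 ≤ p) (hq : 0 ≤ q) (hpq : p + q = 1)
    (hx : 0 ≤ x) (hy : 0 ≤ y) :
    p ^ 2 * x * y ^ 2 + q ^ 2 * y * x ^ 2 + (p ^ 2 * x ^ 2 * y + q ^ 2 * y ^ 2 * x)
      ≤ x ^ 2 * y + y ^ 2 * x := by
  have hsq : p ^ 2 + q ^ 2 ≤ 1 := by nlinarith [mul_nonneg hp hq]
  have hxy : 0 ≤ x * y * (x + y) := by positivity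
  nlinarith [mul_le_mul_of_nonneg_right hsq hxy]

/-- Let `A` be a set of unordered pairs of distinct elements of `V`, `E` the set of 3-element
subsets of `V` at least 2 of whose pairs lie in `A`, and `p : V × V → [0,1]` with
`p (u,v) + p (v,u) = 1` on pairs of `A` and `p (u,v) = p (v,u) = 0` otherwise. Then for
nonnegative reals `x`,
`∑_{{u,v,w}∈E} (1 − p(u,v)p(u,w) − p(v,w)p(v,u) − p(w,u)p(w,v))·x_u·x_v·x_w
  + (1/2)·∑_{{u,v}∈A} (p(u,v)²·x_u²·x_v + p(v,u)²·x_v²·x_u)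
≤ ∑_{{u,v,w}∈E} x_u·x_v·x_w + (1/2)·∑_{{u,v}∈A} (x_u²·x_v + x_v²·x_u)
  − (1/2)·∑_{u∈V} x_u·(∑_{v : {u,v}∈A} p(u,v)·x_v)²`. -/
theorem stmt_13 {V : Type*} [Fintype V] [DecidableEq V] (A : Finset (Finset V))
    (hA : ∀ e ∈ A, e.card = 2) (p : V × V → ℝ)
    (hp01 : ∀ q : V × V, 0 ≤ p q ∧ p q ≤ 1)
    (hp1 : ∀ u v : V, ({u, v} : Finset V) ∈ A → p (u, v) + p (v, u) = 1)
    (hp0 : ∀ u v : V, ({u, v} : Finset V) ∉ A → p (u, v) = 0 ∧ p (v, u) = 0)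
    (x : V → ℝ) (hx : ∀ v, 0 ≤ x v) :
    (∑ t ∈ triEdges A, (1 - ∑ a ∈ t, ∏ b ∈ t.erase a, p (a, b)) * ∏ v ∈ t, x v)
      + (1 / 2) * ∑ e ∈ A, ∑ a ∈ e, ∑ b ∈ e.erase a, p (a, b) ^ 2 * x a ^ 2 * x b
    ≤ (∑ t ∈ triEdges A, ∏ v ∈ t, x v)
      + (1 / 2) * ∑ e ∈ A, ∑ a ∈ e, ∑ b ∈ e.erase a, x a ^ 2 * x b
      - (1 / 2) * ∑ u, x u *
          (∑ v ∈ Finset.univ.filter (fun v => ({u, v} : Finset V) ∈ A), p (u, v) * x v) ^ 2 := by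
  have hp : ∀ a b : V, ({a, b} : Finset V) ∉ A → p (a, b) = 0 := fun a b h => (hp0 a b h).1
  have hrow : ∀ u, ∑ v ∈ univ.filter (fun v => ({u, v} : Finset V) ∈ A), p (u, v) * x v
      = ∑ v, p (u, v) * x v := fun u =>
    sum_filter_of_ne fun v _ hv => by_contra fun h => hv (by rw [hp u v h, zero_mul])
  have hedges : ∑ e ∈ A, ∑ a ∈ e, ∑ b ∈ e.erase a, p (a, b) ^ 2 * x a * x b ^ 2
      + ∑ e ∈ A, ∑ a ∈ e, ∑ b ∈ e.erase a, p (a, b) ^ 2 * x a ^ 2 * x b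
      ≤ ∑ e ∈ A, ∑ a ∈ e, ∑ b ∈ e.erase a, x a ^ 2 * x b := by
    rw [← sum_add_distrib]
    refine sum_le_sum fun e he => ?_
    obtain ⟨u, v, huv, rfl⟩ := card_eq_two.mp (hA e he)
    simp only [sum_sum_erase_pair huv]
    exact weighted_cubic_le (hp01 _).1 (hp01 _).1 (hp1 u v he) (hx u) (hx v)
  simp only [hrow, sub_mul, one_mul, sum_sub_distrib]
  rw [sum_mul_sq_sum_eq_sum_edges_add_sum_triEdges hA p hp x]
  linarith
end

section
/- Let V be a finite set, A a set of unordered pairs of distinct elements of V, and let E be the set of 3-element subsets {u,v,w} of V such that at least 2 of the pairs {u,v},{v,w},{u,w} belong to A. Let p : V × V → [0,1] satisfy p(u,v) + p(v,u) = 1 whenever {u,v} ∈ A and p(u,v) = p(v,u) = 0 whenever {u,v} ∉ A, and let (x_v)_{v∈V} be nonnegative reals with ∑_{v∈V} x_v = 1. Then ∑_{{u,v,w}∈E} (1 − p(u,v)p(u,w) − p(v,w)p(v,u) − p(w,u)p(w,v))·x_u·x_v·x_w + (1/2)·∑_{{u,v}∈A} (p(u,v)²·x_u²·x_v + p(v,u)²·x_v²·x_u)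 ≤ ∑_{{u,v,w}∈E} x_u·x_v·x_w + (1/2)·∑_{{u,v}∈A} (x_u²·x_v + x_v²·x_u) − (1/2)·(∑_{{u,v}∈A} x_u·x_v)². -/
open Finset

theorem Multiset.two_mul_esymm_two {R : Type*} [CommRing R] (s : Multiset R) :
    2 * s.esymm 2 = s.sum ^ 2 - (s.map (· ^ 2)).sum := by
  induction s using Multiset.induction with
  | empty => simp [Multiset.esymm, Multiset.powersetCard_zero_right]
  | cons a s ih =>
    have hcons : (a ::ₘ s).esymm 2 = s.esymm 2 + a * s.sum := by
      simp only [Multiset.esymm, Multiset.powersetCard_cons, Multiset.powersetCard_one,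
        Multiset.map_add, Multiset.map_map, Function.comp_apply, Multiset.prod_cons,
        Multiset.prod_singleton, Multiset.sum_add, add_right_inj]
      exact Multiset.sum_map_mul_left.trans (by rw [Multiset.map_id'])
    rw [hcons, Multiset.sum_cons, Multiset.map_cons, Multiset.sum_cons]
    linear_combination ih

theorem Finset.two_mul_sum_powersetCard_two_prod {α R : Type*} [CommRing R] (s : Finset α)
    (g : α → R) :
    2 * ∑ t ∈ s.powersetCard 2, ∏ b ∈ t, g b = (∑ b ∈ s, g b) ^ 2 - ∑ b ∈ s, g b ^ 2 := by
  rw [← esymm_map_val, Multiset.two_mul_esymm_two, Multiset.map_map]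
  rfl

theorem Finset.sum_powersetCard_succ_sum_erase_s14 {α M : Type*} [DecidableEq α] [AddCommMonoid M]
    (s : Finset α) (n : ℕ) (h : α → Finset α → M) :
    ∑ t ∈ s.powersetCard (n + 1), ∑ a ∈ t, h a (t.erase a)
      = ∑ a ∈ s, ∑ t ∈ (s.erase a).powersetCard n, h a t := by
  rw [sum_sigma', sum_sigma']
  refine sum_nbij' (fun q => ⟨q.2, q.1.erase q.2⟩) (fun q => ⟨insert q.1 q.2, q.1⟩)
    ?_ ?_ ?_ ?_ fun _ _ => rfl
  · rintro ⟨t, a⟩ hq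
    simp only [mem_sigma, mem_powersetCard] at hq ⊢
    exact ⟨hq.1.1 hq.2, erase_subset_erase a hq.1.1, by rw [card_erase_of_mem hq.2, hq.1.2]; rfl⟩
  · rintro ⟨a, t⟩ hq
    simp only [mem_sigma, mem_powersetCard, subset_erase] at hq ⊢
    exact ⟨⟨insert_subset hq.1 hq.2.1.1, card_insert_of_notMem hq.2.1.2 ▸ by rw [hq.2.2]⟩,
      mem_insert_self a t⟩
  · rintro ⟨t, a⟩ hq
    simp only [mem_sigma] at hq
    simp [insert_erase hq.2]
  · rintro ⟨a, t⟩ hq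
    simp only [mem_sigma, mem_powersetCard, subset_erase] at hq
    simp [erase_insert hq.2.1.2]

theorem Finset.sum_sum_erase_pair_s14 {α M : Type*} [DecidableEq α] [AddCommMonoid M] {u v : α}
    (huv : u ≠ v) (f : α → α → M) :
    ∑ a ∈ {u, v}, ∑ b ∈ ({u, v} : Finset α).erase a, f a b = f u v + f v u := by
  rw [sum_pair huv, erase_insert (notMem_singleton.2 huv), pair_comm,
    erase_insert (notMem_singleton.2 huv.symm), sum_singleton, sum_singleton]

theorem Finset.sum_sum_sum_erase_eq_sum_sum {α M : Type*} [Fintype α] [DecidableEq α]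
    [AddCommMonoid M] {A : Finset (Finset α)} (hA : ∀ e ∈ A, e.card = 2) {f : α → α → M}
    (hf : ∀ a b, ({a, b} : Finset α) ∉ A → f a b = 0) :
    ∑ e ∈ A, ∑ a ∈ e, ∑ b ∈ e.erase a, f a b = ∑ a, ∑ b, f a b := by
  rw [← sum_product' univ univ f,
    ← sum_filter_of_ne (p := fun q : α × α => ({q.1, q.2} : Finset α) ∈ A)
      fun q _ hq => not_imp_comm.1 (hf q.1 q.2) hq,
    ← sum_fiberwise_of_maps_to (g := fun q : α × α => ({q.1, q.2} : Finset α)) (t := A)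
      fun q hq => (mem_filter.1 hq).2]
  refine sum_congr rfl fun e he => ?_
  obtain ⟨u, v, huv, rfl⟩ := card_eq_two.1 (hA e he)
  have hfiber : {q ∈ {q ∈ (univ : Finset α) ×ˢ (univ : Finset α) |
      ({q.1, q.2} : Finset α) ∈ A} | ({q.1, q.2} : Finset α) = {u, v}} = {(u, v), (v, u)} := by
    ext ⟨a, b⟩
    simp only [mem_filter, mem_product, mem_univ, true_and, mem_insert, mem_singleton,
      Prod.mk.injEq, ← coe_inj, coe_pair, Set.pair_eq_pair_iff]
    refine ⟨And.right, fun h => ⟨?_, h⟩⟩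
    rcases h with ⟨rfl, rfl⟩ | ⟨rfl, rfl⟩
    · exact he
    · rwa [pair_comm]
  rw [hfiber, sum_sum_erase_pair_s14 huv, sum_pair (by simp [huv])]

theorem Finset.sq_sum_mul_le_sum_mul_sq {ι : Type*} (s : Finset ι) {w : ι → ℝ}
    (hw : ∀ i ∈ s, 0 ≤ w i) (hw1 : ∑ i ∈ s, w i = 1) (y : ι → ℝ) :
    (∑ i ∈ s, w i * y i) ^ 2 ≤ ∑ i ∈ s, w i * y i ^ 2 := by
  simpa [hw1] using sum_sq_le_sum_mul_sum_of_sq_le_mul s hw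
    (fun i hi => mul_nonneg (hw i hi) (sq_nonneg (y i)))
    fun i _ => (by ring : _ = w i * (w i * y i ^ 2)).le

section Orientation

variable {V : Type*} [DecidableEq V] {A : Finset (Finset V)} {p : V × V → ℝ}

def outWeight [Fintype V] (p : V × V → ℝ) (x : V → ℝ) (v : V) : ℝ :=
  ∑ w, p (v, w) * x w

theorem weight_self_eq_zero (hA : ∀ e ∈ A, e.card = 2)
    (hp0 : ∀ u v : V, ({u, v} : Finset V) ∉ A → p (u, v) = 0 ∧ p (v, u) = 0) (a : V) :
    p (a, a) = 0 :=
  (hp0 a a fun h => by simpa using hA _ h).1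

theorem prod_weight_erase_eq_zero_of_notMem_triEdges [Fintype V]
    (hp0 : ∀ u v : V, ({u, v} : Finset V) ∉ A → p (u, v) = 0 ∧ p (v, u) = 0)
    {t : Finset V} (ht : t.card = 3) (htA : t ∉ triEdges A) {a : V} (ha : a ∈ t) :
    ∏ b ∈ t.erase a, p (a, b) = 0 := by
  obtain ⟨b, c, hbc, hbc_eq⟩ := card_eq_two.1 (by rw [card_erase_of_mem ha, ht] :
    (t.erase a).card = 2)
  have hb : b ∈ t.erase a := hbc_eq ▸ mem_insert_self b {c}
  have hc : c ∈ t.erase a := hbc_eq ▸ mem_insert_of_mem (mem_singleton_self c)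
  rw [hbc_eq, prod_pair hbc]
  by_contra hne
  have hmem : ∀ d ∈ t.erase a, p (a, d) ≠ 0 →
      ({a, d} : Finset V) ∈ (t.powersetCard 2).filter (· ∈ A) := fun d hd hpd => by
    rw [mem_erase] at hd
    refine mem_filter.2 ⟨mem_powersetCard.2 ⟨insert_subset ha (singleton_subset_iff.2 hd.2),
      card_pair hd.1.symm⟩, ?_⟩
    by_contra hdA
    exact hpd (hp0 a d hdA).1
  refine htA (mem_filter.2 ⟨mem_univ t, ht, one_lt_card.2
    ⟨_, hmem b hb (left_ne_zero_of_mul hne), _, hmem c hc (right_ne_zero_of_mul hne),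
      fun h => hbc ?_⟩⟩)
  have hcb : c ∈ ({a, b} : Finset V) := h ▸ mem_insert_of_mem (mem_singleton_self c)
  simp only [mem_insert, mem_singleton, (mem_erase.1 hc).1, false_or] at hcb
  exact hcb.symm

theorem two_mul_sum_triEdges_eq [Fintype V] (hA : ∀ e ∈ A, e.card = 2)
    (hp0 : ∀ u v : V, ({u, v} : Finset V) ∉ A → p (u, v) = 0 ∧ p (v, u) = 0) (x : V → ℝ) :
    2 * ∑ t ∈ triEdges A, (∑ a ∈ t, ∏ b ∈ t.erase a, p (a, b)) * ∏ v ∈ t, x v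
      = ∑ v, x v * outWeight p x v ^ 2 - ∑ v, x v * ∑ w, (p (v, w) * x w) ^ 2 := by
  have hzero : ∀ t ∈ univ.powersetCard 3, t ∉ triEdges A →
      (∑ a ∈ t, ∏ b ∈ t.erase a, p (a, b)) * ∏ v ∈ t, x v = 0 := fun t ht htA => by
    rw [sum_eq_zero fun a ha => prod_weight_erase_eq_zero_of_notMem_triEdges hp0
      (mem_powersetCard_univ.1 ht) htA ha, zero_mul]
  have hsplit : ∀ t : Finset V, (∑ a ∈ t, ∏ b ∈ t.erase a, p (a, b)) * ∏ v ∈ t, x v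
      = ∑ a ∈ t, x a * ∏ b ∈ t.erase a, p (a, b) * x b := fun t => by
    rw [sum_mul]
    refine sum_congr rfl fun a ha => ?_
    rw [prod_mul_distrib, ← mul_prod_erase t x ha]
    ring
  rw [sum_subset (fun t ht => mem_powersetCard_univ.2 (mem_filter.1 ht).2.1) hzero,
    sum_congr rfl fun t _ => hsplit t,
    sum_powersetCard_succ_sum_erase_s14 univ 2 fun a s => x a * ∏ b ∈ s, p (a, b) * x b, mul_sum,
    ← sum_sub_distrib]
  refine sum_congr rfl fun a _ => ?_
  have hloop : p (a, a) * x a = 0 := by rw [weight_self_eq_zero hA hp0, zero_mul]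
  rw [← mul_sum, mul_left_comm, two_mul_sum_powersetCard_two_prod,
    sum_erase univ (f := fun b => p (a, b) * x b) hloop,
    sum_erase univ (f := fun b => (p (a, b) * x b) ^ 2) (by rw [hloop, sq, zero_mul]),
    outWeight, mul_sub]

theorem sum_edges_prod_eq_sum_mul_outWeight [Fintype V] (hA : ∀ e ∈ A, e.card = 2)
    (hp1 : ∀ u v : V, ({u, v} : Finset V) ∈ A → p (u, v) + p (v, u) = 1)
    (hp0 : ∀ u v : V, ({u, v} : Finset V) ∉ A → p (u, v) = 0 ∧ p (v, u) = 0) (x : V → ℝ) :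
    ∑ e ∈ A, ∏ v ∈ e, x v = ∑ v, x v * outWeight p x v := by
  have hedge : ∀ e ∈ A, ∏ v ∈ e, x v = ∑ a ∈ e, ∑ b ∈ e.erase a, p (a, b) * x a * x b := by
    intro e he
    obtain ⟨u, v, huv, rfl⟩ := card_eq_two.1 (hA e he)
    rw [sum_sum_erase_pair_s14 huv, prod_pair huv]
    linear_combination (x u * x v) * (hp1 u v he).symm
  rw [sum_congr rfl hedge,
    sum_sum_sum_erase_eq_sum_sum hA fun a b hab => by rw [(hp0 a b hab).1, zero_mul, zero_mul]]
  simp only [outWeight, mul_sum]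
  exact sum_congr rfl fun v _ => sum_congr rfl fun w _ => by ring

theorem sum_edges_weight_sq_add_le (hA : ∀ e ∈ A, e.card = 2) (hp : ∀ q, 0 ≤ p q)
    (hp1 : ∀ u v : V, ({u, v} : Finset V) ∈ A → p (u, v) + p (v, u) = 1)
    {x : V → ℝ} (hx : ∀ v, 0 ≤ x v) :
    ∑ e ∈ A, ∑ a ∈ e, ∑ b ∈ e.erase a, p (a, b) ^ 2 * (x a * x b ^ 2)
      + ∑ e ∈ A, ∑ a ∈ e, ∑ b ∈ e.erase a, p (a, b) ^ 2 * x a ^ 2 * x b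
      ≤ ∑ e ∈ A, ∑ a ∈ e, ∑ b ∈ e.erase a, x a ^ 2 * x b := by
  rw [← sum_add_distrib]
  refine sum_le_sum fun e he => ?_
  obtain ⟨u, v, huv, rfl⟩ := card_eq_two.1 (hA e he)
  simp only [sum_sum_erase_pair_s14 huv]
  have hsq : p (u, v) ^ 2 + p (v, u) ^ 2 ≤ 1 := by
    nlinarith [mul_nonneg (hp (u, v)) (hp (v, u)), hp1 u v he]
  nlinarith [mul_nonneg (sub_nonneg.2 hsq)
    (mul_nonneg (mul_nonneg (hx u) (hx v)) (add_nonneg (hx u) (hx v)))]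

end Orientation

/-- Let `A` be a set of unordered pairs of distinct elements of `V`, `E` the set of 3-element
subsets of `V` at least 2 of whose pairs lie in `A`, and `p : V × V → [0,1]` with
`p (u,v) + p (v,u) = 1` on pairs of `A` and `p (u,v) = p (v,u) = 0` otherwise. Then for
nonnegative reals `x` summing to `1`,
`∑_{{u,v,w}∈E} (1 − p(u,v)p(u,w) − p(v,w)p(v,u) − p(w,u)p(w,v))·x_u·x_v·x_w
  + (1/2)·∑_{{u,v}∈A} (p(u,v)²·x_u²·x_v + p(v,u)²·x_v²·x_u)
≤ ∑_{{u,v,w}∈E} x_u·x_v·x_w + (1/2)·∑_{{u,v}∈A} (x_u²·x_v + x_v²·x_u)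
  − (1/2)·(∑_{{u,v}∈A} x_u·x_v)²`. -/
theorem stmt_14 {V : Type*} [Fintype V] [DecidableEq V] (A : Finset (Finset V))
    (hA : ∀ e ∈ A, e.card = 2) (p : V × V → ℝ)
    (hp01 : ∀ q : V × V, 0 ≤ p q ∧ p q ≤ 1)
    (hp1 : ∀ u v : V, ({u, v} : Finset V) ∈ A → p (u, v) + p (v, u) = 1)
    (hp0 : ∀ u v : V, ({u, v} : Finset V) ∉ A → p (u, v) = 0 ∧ p (v, u) = 0)
    (x : V → ℝ) (hx : ∀ v, 0 ≤ x v) (hsum : ∑ v, x v = 1) :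
    (∑ t ∈ triEdges A, (1 - ∑ a ∈ t, ∏ b ∈ t.erase a, p (a, b)) * ∏ v ∈ t, x v)
      + (1 / 2) * ∑ e ∈ A, ∑ a ∈ e, ∑ b ∈ e.erase a, p (a, b) ^ 2 * x a ^ 2 * x b
    ≤ (∑ t ∈ triEdges A, ∏ v ∈ t, x v)
      + (1 / 2) * ∑ e ∈ A, ∑ a ∈ e, ∑ b ∈ e.erase a, x a ^ 2 * x b
      - (1 / 2) * (∑ e ∈ A, ∏ v ∈ e, x v) ^ 2 := by
  have hCS := sq_sum_mul_le_sum_mul_sq univ (fun v _ => hx v) hsum (outWeight p x)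
  have hT := two_mul_sum_triEdges_eq hA hp0 x
  have hD : ∑ e ∈ A, ∑ a ∈ e, ∑ b ∈ e.erase a, p (a, b) ^ 2 * (x a * x b ^ 2)
      = ∑ v, x v * ∑ w, (p (v, w) * x w) ^ 2 := by
    rw [sum_sum_sum_erase_eq_sum_sum hA fun a b hab => by rw [(hp0 a b hab).1]; ring]
    simp only [mul_sum]
    exact sum_congr rfl fun v _ => sum_congr rfl fun w _ => by ring
  have hE := sum_edges_weight_sq_add_le hA (fun q => (hp01 q).1) hp1 hx
  rw [sum_edges_prod_eq_sum_mul_outWeight hA hp1 hp0 x]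
  simp only [sub_mul, one_mul, sum_sub_distrib]
  linarith
end
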